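/- arXiv:1811.08467 — 6 statements merged into one kernel-verified Lean document; each statement's English description precedes it below -/
import Mathlib

section
/- Suppose both families A = {A_ij} and B = {B_ij} are irreducible in the coupled sense, and matrices X_i (size n_i×m_i) satisfy A_ij X_j = X_i B_ij for all i,j ∈ I. Then either X_i = 0 for all i, or X_i is invertible for all i (in which case m_i = n_i for all i). -/
open Matrix

/-- A family of subspaces is coupled-invariant for `A` if each `A i j` maps `U j` into `U i`. -/
def CoupledInvariant {F : Type*} [Field F] {I : Type*} {n : I → ℕ}
    (A : ∀ i j : I, Matrix (Fin (n i)) (Fin (n j)) F)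
    (U : ∀ i : I, Submodule F (Fin (n i) → F)) : Prop :=
  ∀ i j, (U j).map (A i j).mulVecLin ≤ U i

/-- `A` is irreducible in the coupled sense: every coupled-invariant family of subspaces is
either everywhere `⊥` or everywhere `⊤`. -/
def CoupledIrreducible {F : Type*} [Field F] {I : Type*} {n : I → ℕ}
    (A : ∀ i j : I, Matrix (Fin (n i)) (Fin (n j)) F) : Prop :=
  ¬ ∃ U : ∀ i : I, Submodule F (Fin (n i) → F),
      (∃ i, U i ≠ ⊥) ∧ (∃ i, U i ≠ ⊤) ∧ CoupledInvariant A U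

/-- Irreducibility dichotomy: a coupled-invariant family is all `⊥` or all `⊤`. -/
lemma coupledIrreducible_dichotomy {F : Type*} [Field F] {I : Type*} {n : I → ℕ}
    {A : ∀ i j : I, Matrix (Fin (n i)) (Fin (n j)) F} (hA : CoupledIrreducible A)
    {U : ∀ i : I, Submodule F (Fin (n i) → F)} (hU : CoupledInvariant A U) :
    (∀ i, U i = ⊥) ∨ (∀ i, U i = ⊤) := by
  by_contra h
  push_neg at h
  obtain ⟨h1, h2⟩ := h
  obtain ⟨i, hi⟩ := h1
  obtain ⟨j, hj⟩ := h2
  exact hA ⟨U, ⟨i, hi⟩, ⟨j, hj⟩, hU⟩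

lemma mulVecLin_eq_zero_iff {F : Type*} [Field F] {a b : ℕ}
    (M : Matrix (Fin a) (Fin b) F) : M.mulVecLin = 0 ↔ M = 0 := by
  constructor
  · intro h
    ext i j
    have h2 := congrFun (LinearMap.congr_fun h (Pi.single j 1)) i
    simpa [Matrix.mulVecLin, Matrix.mulVec_single] using h2
  · rintro rfl; exact Matrix.mulVecLin_zero

/-- Coupled Schur's Lemma: if `A` and `B` are coupled-irreducible, then either all `X i`
vanish or all `X i` are invertible (and then `m i = n i` for all `i`). -/
theorem stmt_3 {F : Type*} [Field F] {I : Type*} {n m : I → ℕ}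
    (A : ∀ i j : I, Matrix (Fin (n i)) (Fin (n j)) F)
    (B : ∀ i j : I, Matrix (Fin (m i)) (Fin (m j)) F)
    (hA : CoupledIrreducible A) (hB : CoupledIrreducible B)
    (X : ∀ i : I, Matrix (Fin (n i)) (Fin (m i)) F)
    (hX : ∀ i j, A i j * X j = X i * B i j) :
    (∀ i, X i = 0) ∨ (∀ i, Function.Bijective (X i).mulVecLin ∧ m i = n i) := by
  classical
  -- ranges are coupled-invariant for A
  have hUinv : CoupledInvariant A (fun i => LinearMap.range (X i).mulVecLin) := by
    intro i j
    rintro x ⟨y, ⟨v, rfl⟩, rfl⟩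
    refine ⟨(B i j).mulVecLin v, ?_⟩
    have h := congrArg Matrix.mulVecLin (hX i j)
    rw [Matrix.mulVecLin_mul, Matrix.mulVecLin_mul] at h
    exact (LinearMap.congr_fun h v).symm
  -- kernels are coupled-invariant for B
  have hWinv : CoupledInvariant B (fun i => LinearMap.ker (X i).mulVecLin) := by
    intro i j
    rintro x ⟨v, hv, rfl⟩
    have h := congrArg Matrix.mulVecLin (hX i j)
    rw [Matrix.mulVecLin_mul, Matrix.mulVecLin_mul] at h
    have h2 := LinearMap.congr_fun h v
    simp only [LinearMap.coe_comp, Function.comp_apply] at h2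
    simp only [LinearMap.mem_ker] at hv ⊢
    rw [← h2, hv, map_zero]
  rcases coupledIrreducible_dichotomy hA hUinv with hbot | htop
  · left
    intro i
    have : (X i).mulVecLin = 0 := LinearMap.range_eq_bot.mp (hbot i)
    exact (mulVecLin_eq_zero_iff (X i)).mp this
  · rcases coupledIrreducible_dichotomy hB hWinv with hker | hker
    · right
      intro i
      have hsurj : Function.Surjective (X i).mulVecLin :=
        LinearMap.range_eq_top.mp (htop i)
      have hinj : Function.Injective (X i).mulVecLin :=
        LinearMap.ker_eq_bot.mp (hker i)
      refine ⟨⟨hinj, hsurj⟩, ?_⟩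
      have e := LinearEquiv.ofBijective (X i).mulVecLin ⟨hinj, hsurj⟩
      have := e.finrank_eq
      simpa [Module.finrank_fin_fun] using this
    · left
      intro i
      have : (X i).mulVecLin = 0 := LinearMap.ker_eq_top.mp (hker i)
      exact (mulVecLin_eq_zero_iff (X i)).mp this
end

section
/- Let A = {A_ij}, B = {B_ij} with A_ij X_j = X_i B_ij for all i,j ∈ I, where X_i is n_i×m_i. If the vertices i and j are strongly connected in the digraph D(B) (edge i→j iff B_ij has full column rank), then X_i and X_j have the same rank. -/
open Matrix

/-- The edge relation of the digraph `D(B)`: `i → j` iff `B i j` has full column rank. -/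
def DigraphEdge {F : Type*} [Field F] {I : Type*} {m : I → ℕ}
    (B : ∀ i j : I, Matrix (Fin (m i)) (Fin (m j)) F) (i j : I) : Prop :=
  Function.Injective (B i j).mulVecLin

/-- If `i` and `j` are strongly connected in `D(B)`, then `X i` and `X j` have the
same rank. -/
theorem stmt_8 {F : Type*} [Field F] {I : Type*} {n m : I → ℕ}
    (A : ∀ i j : I, Matrix (Fin (n i)) (Fin (n j)) F)
    (B : ∀ i j : I, Matrix (Fin (m i)) (Fin (m j)) F)
    (X : ∀ i : I, Matrix (Fin (n i)) (Fin (m i)) F)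
    (hX : ∀ i j, A i j * X j = X i * B i j)
    (i j : I)
    (hij : Relation.ReflTransGen (DigraphEdge B) i j)
    (hji : Relation.ReflTransGen (DigraphEdge B) j i) :
    (X i).rank = (X j).rank := by
  set ν : I → ℕ := fun k => Module.finrank F (LinearMap.ker (X k).mulVecLin) with hν
  have step : ∀ a b : I, DigraphEdge B a b → m b ≤ m a ∧ ν b ≤ ν a := by
    intro a b hab
    constructor
    · have h := LinearMap.finrank_le_finrank_of_injective hab
      simpa [Module.finrank_fin_fun] using h
    · have hmap : ∀ x ∈ LinearMap.ker (X b).mulVecLin,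
          (B a b).mulVecLin x ∈ LinearMap.ker (X a).mulVecLin := by
        intro x hx
        simp only [LinearMap.mem_ker] at hx ⊢
        have h1 : (X a * B a b).mulVecLin x = 0 := by
          rw [← hX a b]
          simp [Matrix.mulVecLin_mul, hx]
        simpa [Matrix.mulVecLin_mul] using h1
      set g := (B a b).mulVecLin.restrict hmap with hg
      have hginj : Function.Injective g := by
        intro x y hxy
        apply Subtype.ext
        apply hab
        have := congrArg Subtype.val hxy
        simpa [hg, LinearMap.restrict_apply] using this
      exact LinearMap.finrank_le_finrank_of_injective hginj
  have ineq : ∀ a b : I, Relation.ReflTransGen (DigraphEdge B) a b →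
      m b ≤ m a ∧ ν b ≤ ν a := by
    intro a b hab
    induction hab with
    | refl => exact ⟨le_rfl, le_rfl⟩
    | tail h1 h2 ih => exact ⟨(step _ _ h2).1.trans ih.1, (step _ _ h2).2.trans ih.2⟩
  obtain ⟨hm1, hν1⟩ := ineq i j hij
  obtain ⟨hm2, hν2⟩ := ineq j i hji
  have hm : m i = m j := le_antisymm hm2 hm1
  have hνeq : ν i = ν j := le_antisymm hν2 hν1
  have ri := LinearMap.finrank_range_add_finrank_ker (X i).mulVecLin
  have rj := LinearMap.finrank_range_add_finrank_ker (X j).mulVecLin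
  rw [Module.finrank_fin_fun] at ri rj
  have hri : (X i).rank + ν i = m i := ri
  have hrj : (X j).rank + ν j = m j := rj
  omega
end

section
/- Let A be a normal complex n×n matrix, S invertible, and B = S^{-1} A S. Then B is normal if and only if S^{-1} A* S = B*, if and only if S S* commutes with A, if and only if S* S commutes with B. -/
open Matrix

private lemma aux_trace_zero {n : ℕ} (X : Matrix (Fin n) (Fin n) ℂ)
    (h : Matrix.trace (X * Xᴴ) = 0) : X = 0 := by
  have h' : ∑ i, ∑ j, Complex.normSq (X i j) = 0 := by
    have e : Matrix.trace (X * Xᴴ) = ∑ i, ∑ j, (Complex.normSq (X i j) : ℂ) := by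
      simp [Matrix.trace, Matrix.mul_apply, Matrix.conjTranspose_apply, Matrix.diag,
        Complex.mul_conj]
    rw [e] at h
    exact_mod_cast h
  ext i j
  have hi := (Finset.sum_eq_zero_iff_of_nonneg (fun i _ =>
      Finset.sum_nonneg fun j _ => Complex.normSq_nonneg _)).mp h' i (Finset.mem_univ i)
  have hj := (Finset.sum_eq_zero_iff_of_nonneg (fun j _ =>
      Complex.normSq_nonneg _)).mp hi j (Finset.mem_univ j)
  simpa using Complex.normSq_eq_zero.mp hj

/-- Fuglede–Putnam for matrices via the trace argument. -/
private lemma aux_fp {n : ℕ} (A B S : Matrix (Fin n) (Fin n) ℂ)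
    (hA : A * Aᴴ = Aᴴ * A) (hB : B * Bᴴ = Bᴴ * B) (hS : A * S = S * B) :
    Aᴴ * S = S * Bᴴ := by
  have hXc : (Aᴴ * S - S * Bᴴ)ᴴ = Sᴴ * A - B * Sᴴ := by
    simp [conjTranspose_sub, conjTranspose_mul]
  have key : Matrix.trace ((Aᴴ * S - S * Bᴴ) * (Aᴴ * S - S * Bᴴ)ᴴ) = 0 := by
    rw [hXc, mul_sub, sub_mul, sub_mul, trace_sub, trace_sub, trace_sub]
    have e1 : Matrix.trace (Aᴴ * S * (Sᴴ * A)) = Matrix.trace (Aᴴ * S * (B * Sᴴ)) := by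
      rw [trace_mul_comm (Aᴴ * S) (Sᴴ * A), trace_mul_comm (Aᴴ * S) (B * Sᴴ)]
      have l1 : Sᴴ * A * (Aᴴ * S) = Sᴴ * Aᴴ * S * B := by
        calc Sᴴ * A * (Aᴴ * S) = Sᴴ * (A * Aᴴ) * S := by noncomm_ring
          _ = Sᴴ * (Aᴴ * A) * S := by rw [hA]
          _ = Sᴴ * Aᴴ * (A * S) := by noncomm_ring
          _ = Sᴴ * Aᴴ * (S * B) := by rw [hS]
          _ = Sᴴ * Aᴴ * S * B := by noncomm_ring
      rw [l1, trace_mul_comm (Sᴴ * Aᴴ * S) B]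
      congr 1
      noncomm_ring
    have e2 : Matrix.trace (S * Bᴴ * (Sᴴ * A)) = Matrix.trace (S * Bᴴ * (B * Sᴴ)) := by
      rw [trace_mul_comm (S * Bᴴ) (Sᴴ * A), trace_mul_comm (S * Bᴴ) (B * Sᴴ)]
      have l1 : Sᴴ * A * (S * Bᴴ) = Sᴴ * S * (B * Bᴴ) := by
        calc Sᴴ * A * (S * Bᴴ) = Sᴴ * (A * S) * Bᴴ := by noncomm_ring
          _ = Sᴴ * (S * B) * Bᴴ := by rw [hS]
          _ = Sᴴ * S * (B * Bᴴ) := by noncomm_ring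
      have l2 : B * Sᴴ * (S * Bᴴ) = B * (Sᴴ * S) * Bᴴ := by noncomm_ring
      rw [l1, l2, hB, trace_mul_comm (Sᴴ * S) (Bᴴ * B), trace_mul_comm (B * (Sᴴ * S)) Bᴴ]
      congr 1
      noncomm_ring
    rw [e1, e2]
    ring
  have hz := aux_trace_zero _ key
  exact sub_eq_zero.mp hz

/-- For a normal matrix `A`, invertible `S`, and `B = S⁻¹ A S`: `B` is normal iff
`S⁻¹ A* S = B*` iff `S S*` commutes with `A` iff `S* S` commutes with `B`. -/
theorem stmt_11 {n : ℕ} (A S : Matrix (Fin n) (Fin n) ℂ)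
    (hA : A * Aᴴ = Aᴴ * A) (hS : IsUnit S) :
    ((S⁻¹ * A * S) * (S⁻¹ * A * S)ᴴ = (S⁻¹ * A * S)ᴴ * (S⁻¹ * A * S) ↔
      S⁻¹ * Aᴴ * S = (S⁻¹ * A * S)ᴴ) ∧
    ((S⁻¹ * A * S) * (S⁻¹ * A * S)ᴴ = (S⁻¹ * A * S)ᴴ * (S⁻¹ * A * S) ↔
      (S * Sᴴ) * A = A * (S * Sᴴ)) ∧
    ((S⁻¹ * A * S) * (S⁻¹ * A * S)ᴴ = (S⁻¹ * A * S)ᴴ * (S⁻¹ * A * S) ↔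
      (Sᴴ * S) * (S⁻¹ * A * S) = (S⁻¹ * A * S) * (Sᴴ * S)) := by
  have hdet : IsUnit S.det := (isUnit_iff_isUnit_det S).mp hS
  have hSi : S * S⁻¹ = 1 := mul_nonsing_inv S hdet
  have hiS : S⁻¹ * S = 1 := nonsing_inv_mul S hdet
  set B := S⁻¹ * A * S with hBdef
  have hAS : A * S = S * B := by
    rw [hBdef]
    calc A * S = (S * S⁻¹) * A * S := by rw [hSi, one_mul]
      _ = S * (S⁻¹ * A * S) := by noncomm_ring
  have hBH : Bᴴ = Sᴴ * Aᴴ * S⁻¹ᴴ := by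
    rw [hBdef]; simp [conjTranspose_mul, Matrix.mul_assoc]
  have hSHi : Sᴴ * S⁻¹ᴴ = 1 := by
    rw [← conjTranspose_mul, hiS, conjTranspose_one]
  have hiSH : S⁻¹ᴴ * Sᴴ = 1 := by
    rw [← conjTranspose_mul, hSi, conjTranspose_one]
  -- iff 1 : B normal ↔ S⁻¹ Aᴴ S = Bᴴ
  have i1 : B * Bᴴ = Bᴴ * B ↔ S⁻¹ * Aᴴ * S = Bᴴ := by
    constructor
    · intro h
      have hfp := aux_fp A B S hA h hAS
      calc S⁻¹ * Aᴴ * S = S⁻¹ * (Aᴴ * S) := by rw [Matrix.mul_assoc]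
        _ = S⁻¹ * (S * Bᴴ) := by rw [hfp]
        _ = (S⁻¹ * S) * Bᴴ := by rw [Matrix.mul_assoc]
        _ = Bᴴ := by rw [hiS, one_mul]
    · intro h
      rw [← h, hBdef]
      calc (S⁻¹ * A * S) * (S⁻¹ * Aᴴ * S)
          = S⁻¹ * A * (S * S⁻¹) * (Aᴴ * S) := by noncomm_ring
        _ = S⁻¹ * (A * Aᴴ) * S := by rw [hSi]; noncomm_ring
        _ = S⁻¹ * (Aᴴ * A) * S := by rw [hA]
        _ = S⁻¹ * Aᴴ * (S * S⁻¹) * (A * S) := by rw [hSi]; noncomm_ring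
        _ = (S⁻¹ * Aᴴ * S) * (S⁻¹ * A * S) := by noncomm_ring
  -- iff 2 : S⁻¹ Aᴴ S = Bᴴ ↔ S Sᴴ commutes with A
  have i2 : S⁻¹ * Aᴴ * S = Bᴴ ↔ (S * Sᴴ) * A = A * (S * Sᴴ) := by
    rw [hBH]
    constructor
    · intro h
      have h' : Aᴴ * (S * Sᴴ) = (S * Sᴴ) * Aᴴ := by
        calc Aᴴ * (S * Sᴴ) = (S * S⁻¹) * Aᴴ * (S * Sᴴ) := by rw [hSi, one_mul]
          _ = S * (S⁻¹ * Aᴴ * S) * Sᴴ := by noncomm_ring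
          _ = S * (Sᴴ * Aᴴ * S⁻¹ᴴ) * Sᴴ := by rw [h]
          _ = S * Sᴴ * Aᴴ * (S⁻¹ᴴ * Sᴴ) := by noncomm_ring
          _ = (S * Sᴴ) * Aᴴ := by rw [hiSH, Matrix.mul_one]
      have hc := congrArg conjTranspose h'
      simpa [conjTranspose_mul, Matrix.mul_assoc] using hc
    · intro h
      have h' : Aᴴ * (S * Sᴴ) = (S * Sᴴ) * Aᴴ := by
        have hc := congrArg conjTranspose h
        simpa [conjTranspose_mul, Matrix.mul_assoc] using hc
      calc S⁻¹ * Aᴴ * S = S⁻¹ * Aᴴ * S * (Sᴴ * S⁻¹ᴴ) := by rw [hSHi, Matrix.mul_one]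
        _ = S⁻¹ * (Aᴴ * (S * Sᴴ)) * S⁻¹ᴴ := by noncomm_ring
        _ = S⁻¹ * ((S * Sᴴ) * Aᴴ) * S⁻¹ᴴ := by rw [h']
        _ = (S⁻¹ * S) * (Sᴴ * (Aᴴ * S⁻¹ᴴ)) := by noncomm_ring
        _ = Sᴴ * Aᴴ * S⁻¹ᴴ := by rw [hiS, one_mul, Matrix.mul_assoc]
  -- iff 3 : S Sᴴ commutes with A ↔ Sᴴ S commutes with B
  have i3 : (S * Sᴴ) * A = A * (S * Sᴴ) ↔ (Sᴴ * S) * B = B * (Sᴴ * S) := by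
    constructor
    · intro h
      rw [hBdef]
      calc (Sᴴ * S) * (S⁻¹ * A * S) = Sᴴ * (S * S⁻¹) * (A * S) := by noncomm_ring
        _ = Sᴴ * A * S := by rw [hSi]; noncomm_ring
        _ = (S⁻¹ * S) * (Sᴴ * A * S) := by rw [hiS, one_mul]
        _ = S⁻¹ * ((S * Sᴴ) * A) * S := by noncomm_ring
        _ = S⁻¹ * (A * (S * Sᴴ)) * S := by rw [h]
        _ = (S⁻¹ * A * S) * (Sᴴ * S) := by noncomm_ring
    · intro h
      rw [hBdef] at h
      have h2 : Sᴴ * A * S = S⁻¹ * (A * (S * Sᴴ)) * S := by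
        calc Sᴴ * A * S = Sᴴ * (S * S⁻¹) * (A * S) := by rw [hSi]; noncomm_ring
          _ = (Sᴴ * S) * (S⁻¹ * A * S) := by noncomm_ring
          _ = (S⁻¹ * A * S) * (Sᴴ * S) := h
          _ = S⁻¹ * (A * (S * Sᴴ)) * S := by noncomm_ring
      calc (S * Sᴴ) * A = S * Sᴴ * A * (S * S⁻¹) := by rw [hSi, Matrix.mul_one]
        _ = S * (Sᴴ * A * S) * S⁻¹ := by noncomm_ring
        _ = S * (S⁻¹ * (A * (S * Sᴴ)) * S) * S⁻¹ := by rw [h2]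
        _ = (S * S⁻¹) * (A * (S * Sᴴ)) * (S * S⁻¹) := by noncomm_ring
        _ = A * (S * Sᴴ) := by rw [hSi, one_mul, Matrix.mul_one]
  exact ⟨i1, i1.trans i2, (i1.trans i2).trans i3⟩
end

section
/- Suppose {A_i}_{i∈I} and {B_i}_{i∈I} are irreducible families of normal n×n complex matrices, and S is an invertible n×n complex matrix with S^{-1} A_i S = B_i for all i ∈ I. Then S is a scalar multiple of a unitary matrix. -/
/-!
By the Fuglede–Putnam theorem, `A i * S = S * B i` with `A i`, `B i` normal also gives
`(A i)ᴴ * S = S * (B i)ᴴ`, hence `S * Sᴴ` commutes with every `A i`. Schur's lemma for the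
irreducible family `A` forces `S * Sᴴ = α • 1`; as `S * Sᴴ` is positive semidefinite, `α ≥ 0`,
and `S / √α` is unitary.
-/

open Matrix

theorem SemiconjBy.commute_mul_star_self {A : Type*} [NonUnitalCStarAlgebra A] {a b x : A}
    (ha : IsStarNormal a) (hb : IsStarNormal b) (h : SemiconjBy x b a) :
    Commute (x * star x) a := by
  have hstar : SemiconjBy (star x) a b := by
    simpa using (h.star_right hb ha).star_star_star
  exact h.mul_left hstar

namespace Matrix

variable {K m ι : Type*} [Field K] [Fintype m] [DecidableEq m]

def IsIrreducibleFamily (A : ι → Matrix m m K) : Prop :=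
  ∀ U : Submodule K (m → K), (∀ i, U.map (A i).mulVecLin ≤ U) → U = ⊥ ∨ U = ⊤

theorem IsIrreducibleFamily.exists_eq_smul_one_of_forall_commute [IsAlgClosed K]
    {A : ι → Matrix m m K} (hA : IsIrreducibleFamily A) {H : Matrix m m K}
    (hH : ∀ i, Commute H (A i)) : ∃ α : K, H = α • 1 := by
  cases isEmpty_or_nonempty m
  · exact ⟨0, Subsingleton.elim _ _⟩
  obtain ⟨α, hα⟩ := Module.End.exists_eigenvalue H.mulVecLin
  have hinv : ∀ i, (Module.End.eigenspace H.mulVecLin α).map (A i).mulVecLin ≤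
      Module.End.eigenspace H.mulVecLin α := by
    rintro i _ ⟨x, hx, rfl⟩
    rw [SetLike.mem_coe, Module.End.mem_eigenspace_iff, mulVecLin_apply] at hx
    rw [Module.End.mem_eigenspace_iff, mulVecLin_apply, mulVecLin_apply, mulVec_mulVec,
      (hH i).eq, ← mulVec_mulVec, hx, mulVec_smul]
  have htop := (hA _ hinv).resolve_left hα
  rw [Module.End.eigenspace_def, LinearMap.ker_eq_top, sub_eq_zero] at htop
  refine ⟨α, toLin'.injective ?_⟩
  rw [map_smul, toLin'_one]
  exact htop

open scoped Matrix.Norms.L2Operator in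
theorem commute_self_mul_conjTranspose_of_mul_eq_mul {A B S : Matrix m m ℂ}
    (hA : A * Aᴴ = Aᴴ * A) (hB : B * Bᴴ = Bᴴ * B) (h : A * S = S * B) :
    Commute (S * Sᴴ) A :=
  SemiconjBy.commute_mul_star_self ⟨hA.symm⟩ ⟨hB.symm⟩ h.symm

open scoped Matrix.Norms.L2Operator ComplexOrder in
theorem exists_smul_mem_unitaryGroup_of_self_mul_conjTranspose_eq_smul_one
    {S : Matrix m m ℂ} {α : ℂ} (h : S * Sᴴ = α • 1) :
    ∃ (c : ℂ) (U : Matrix m m ℂ), U ∈ unitaryGroup m ℂ ∧ S = c • U := by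
  by_cases hS : S = 0
  · exact ⟨0, 1, one_mem _, by rw [hS, zero_smul]⟩
  obtain ⟨k⟩ : Nonempty m := by
    by_contra! hm
    exact hS (Subsingleton.elim _ _)
  have hα : 0 ≤ α := by
    simpa [h] using (posSemidef_self_mul_conjTranspose S).diag_nonneg (i := k)
  have hα0 : α ≠ 0 := by
    rintro rfl
    exact hS ((CStarRing.mul_star_self_eq_zero_iff S).mp (by simpa using h))
  set c : ℂ := (√α.re : ℂ)
  have hc : c * c = α := by
    rw [← Complex.ofReal_mul, Real.mul_self_sqrt (Complex.nonneg_iff.mp hα).1,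
      ← Complex.eq_re_of_ofReal_le (r := 0) (by simpa using hα)]
  have hc0 : c ≠ 0 := by
    rintro h0
    exact hα0 (by rw [← hc, h0, zero_mul])
  refine ⟨c, c⁻¹ • S, ?_, by rw [smul_smul, mul_inv_cancel₀ hc0, one_smul]⟩
  rw [mem_unitaryGroup_iff, star_smul, smul_mul_smul, star_eq_conjTranspose, h, smul_smul,
    star_inv₀, show star c = c from Complex.conj_ofReal _, ← mul_inv, hc,
    inv_mul_cancel₀ hα0, one_smul]

end Matrix

theorem stmt_13_general {n : ℕ} {I : Type*}
    (A B : I → Matrix (Fin n) (Fin n) ℂ)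
    (hAnormal : ∀ i, A i * (A i)ᴴ = (A i)ᴴ * A i)
    (hBnormal : ∀ i, B i * (B i)ᴴ = (B i)ᴴ * B i)
    (hAirr : ∀ U : Submodule ℂ (Fin n → ℂ),
      (∀ i, U.map (A i).mulVecLin ≤ U) → U = ⊥ ∨ U = ⊤)
    (S : Matrix (Fin n) (Fin n) ℂ) (hS : IsUnit S)
    (hsim : ∀ i, S⁻¹ * A i * S = B i) :
    ∃ (c : ℂ) (U : Matrix (Fin n) (Fin n) ℂ),
      U ∈ Matrix.unitaryGroup (Fin n) ℂ ∧ S = c • U := by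
  have hAS : ∀ i, A i * S = S * B i := fun i => by
    rw [← hsim i, Matrix.mul_assoc, mul_nonsing_inv_cancel_left _ _
      ((isUnit_iff_isUnit_det S).mp hS)]
  obtain ⟨α, hα⟩ := IsIrreducibleFamily.exists_eq_smul_one_of_forall_commute hAirr
    fun i => commute_self_mul_conjTranspose_of_mul_eq_mul (hAnormal i) (hBnormal i) (hAS i)
  exact exists_smul_mem_unitaryGroup_of_self_mul_conjTranspose_eq_smul_one hα

/-- If two irreducible families of normal complex matrices are simultaneously similar via
`S`, then `S` is a scalar multiple of a unitary matrix. -/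
theorem stmt_13 {n : ℕ} {I : Type*}
    (A B : I → Matrix (Fin n) (Fin n) ℂ)
    (hAnormal : ∀ i, A i * (A i)ᴴ = (A i)ᴴ * A i)
    (hBnormal : ∀ i, B i * (B i)ᴴ = (B i)ᴴ * B i)
    (hAirr : ∀ U : Submodule ℂ (Fin n → ℂ),
      (∀ i, U.map (A i).mulVecLin ≤ U) → U = ⊥ ∨ U = ⊤)
    (hBirr : ∀ U : Submodule ℂ (Fin n → ℂ),
      (∀ i, U.map (B i).mulVecLin ≤ U) → U = ⊥ ∨ U = ⊤)
    (S : Matrix (Fin n) (Fin n) ℂ) (hS : IsUnit S)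
    (hsim : ∀ i, S⁻¹ * A i * S = B i) :
    ∃ (c : ℂ) (U : Matrix (Fin n) (Fin n) ℂ),
      U ∈ Matrix.unitaryGroup (Fin n) ℂ ∧ S = c • U :=
  stmt_13_general A B hAnormal hBnormal hAirr S hS hsim
end

section
/- If a family A = {A_ij}_{i,j∈I} of complex matrices is normal in the coupled sense and is reducible in the coupled sense via subspaces {U_i}, then the orthogonal complements also satisfy A_ij(U_j^⊥) ⊆ U_i^⊥ for all i,j; in particular A is fully reducible in the coupled sense. -/
open Matrix

/-- `A` is normal in the coupled sense: `A_ij* A_ij = A_ji A_ji*` for all `i, j`. -/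
def CoupledNormal {I : Type*} {n : I → ℕ}
    (A : ∀ i j : I, Matrix (Fin (n i)) (Fin (n j)) ℂ) : Prop :=
  ∀ i j, (A i j)ᴴ * A i j = A j i * (A j i)ᴴ

/-!
Let `p`, `q` be the orthogonal projections onto `U_j`, `U_i` and `‖·‖` the Hilbert–Schmidt norm.
Coupled normality, `‖T‖ = ‖T*‖` and the invariance `A_ji(U_i) ⊆ U_j` give
`‖A_ij p‖² = ‖A_ji* p‖² = ‖p A_ji‖² = ‖A_ji q‖² + ‖p A_ji (1 - q)‖²`,
and symmetrically `‖A_ji q‖² = ‖A_ij p‖² + ‖q A_ij (1 - p)‖²`. Adding the two forces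
`q A_ij (1 - p) = 0`, that is `A_ij(U_jᗮ) ⊆ U_iᗮ`.
-/

namespace LinearMap

variable {𝕜 E F G : Type*} [RCLike 𝕜]
  [NormedAddCommGroup E] [InnerProductSpace 𝕜 E] [FiniteDimensional 𝕜 E]
  [NormedAddCommGroup F] [InnerProductSpace 𝕜 F] [FiniteDimensional 𝕜 F]
  [NormedAddCommGroup G] [InnerProductSpace 𝕜 G] [FiniteDimensional 𝕜 G]

noncomputable def hilbertSchmidtNormSq (T : E →ₗ[𝕜] F) : ℝ :=
  RCLike.re (trace 𝕜 E (adjoint T ∘ₗ T))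

theorem hilbertSchmidtNormSq_eq_sum {ι : Type*} [Fintype ι] (T : E →ₗ[𝕜] F)
    (b : OrthonormalBasis ι 𝕜 E) : hilbertSchmidtNormSq T = ∑ i, ‖T (b i)‖ ^ 2 := by
  simp only [hilbertSchmidtNormSq, trace_eq_sum_inner _ b, map_sum, comp_apply,
    adjoint_inner_right, inner_self_eq_norm_sq]

theorem hilbertSchmidtNormSq_nonneg (T : E →ₗ[𝕜] F) : 0 ≤ hilbertSchmidtNormSq T := by
  rw [hilbertSchmidtNormSq_eq_sum T (stdOrthonormalBasis 𝕜 E)]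
  positivity

theorem hilbertSchmidtNormSq_eq_zero_iff {T : E →ₗ[𝕜] F} :
    hilbertSchmidtNormSq T = 0 ↔ T = 0 := by
  let b := stdOrthonormalBasis 𝕜 E
  rw [hilbertSchmidtNormSq_eq_sum T b,
    Finset.sum_eq_zero_iff_of_nonneg fun _ _ => by positivity]
  simp only [Finset.mem_univ, true_implies, sq_eq_zero_iff, norm_eq_zero]
  exact ⟨fun h => b.toBasis.ext fun i => by simpa using h i, fun h i => by simp [h]⟩

theorem hilbertSchmidtNormSq_adjoint (T : E →ₗ[𝕜] F) :
    hilbertSchmidtNormSq (adjoint T) = hilbertSchmidtNormSq T := by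
  rw [hilbertSchmidtNormSq, hilbertSchmidtNormSq, adjoint_adjoint, trace_comp_comm']

theorem hilbertSchmidtNormSq_eq_add_starProjection_comp (T : E →ₗ[𝕜] F) (K : Submodule 𝕜 F) :
    hilbertSchmidtNormSq T = hilbertSchmidtNormSq (K.starProjection.toLinearMap ∘ₗ T) +
      hilbertSchmidtNormSq (Kᗮ.starProjection.toLinearMap ∘ₗ T) := by
  let b := stdOrthonormalBasis 𝕜 E
  simp only [hilbertSchmidtNormSq_eq_sum _ b, ← Finset.sum_add_distrib, comp_apply,
    ContinuousLinearMap.coe_coe, ← K.norm_sq_eq_add_norm_sq_starProjection]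

theorem adjoint_starProjection (K : Submodule 𝕜 E) :
    adjoint K.starProjection.toLinearMap = K.starProjection.toLinearMap :=
  K.starProjection_isSymmetric.adjoint_eq

theorem hilbertSchmidtNormSq_eq_add_comp_starProjection (T : E →ₗ[𝕜] F) (K : Submodule 𝕜 E) :
    hilbertSchmidtNormSq T = hilbertSchmidtNormSq (T ∘ₗ K.starProjection.toLinearMap) +
      hilbertSchmidtNormSq (T ∘ₗ Kᗮ.starProjection.toLinearMap) := by
  rw [← hilbertSchmidtNormSq_adjoint T,
    hilbertSchmidtNormSq_eq_add_starProjection_comp (adjoint T) K,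
    ← hilbertSchmidtNormSq_adjoint (T ∘ₗ _), ← hilbertSchmidtNormSq_adjoint (T ∘ₗ _)]
  simp only [adjoint_comp, adjoint_starProjection]

theorem hilbertSchmidtNormSq_comp_eq_of_adjoint_comp_self_eq {B : E →ₗ[𝕜] F} {C : F →ₗ[𝕜] E}
    (h : adjoint B ∘ₗ B = C ∘ₗ adjoint C) (S : G →ₗ[𝕜] E) :
    hilbertSchmidtNormSq (B ∘ₗ S) = hilbertSchmidtNormSq (adjoint C ∘ₗ S) := by
  simp only [hilbertSchmidtNormSq, adjoint_comp, adjoint_adjoint, comp_assoc]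
  rw [← comp_assoc S B (adjoint B), h, comp_assoc]

theorem starProjection_comp_comp_starProjection {C : F →ₗ[𝕜] E} {U : Submodule 𝕜 E}
    {V : Submodule 𝕜 F} (hC : V.map C ≤ U) :
    U.starProjection.toLinearMap ∘ₗ C ∘ₗ V.starProjection.toLinearMap =
      C ∘ₗ V.starProjection.toLinearMap := by
  ext x
  exact U.starProjection_eq_self_iff.mpr (hC ⟨_, V.starProjection_apply_mem x, rfl⟩)

theorem hilbertSchmidtNormSq_comp_starProjection_eq_add {B : E →ₗ[𝕜] F} {C : F →ₗ[𝕜] E}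
    (hBC : adjoint B ∘ₗ B = C ∘ₗ adjoint C) {U : Submodule 𝕜 E} {V : Submodule 𝕜 F}
    (hC : V.map C ≤ U) :
    hilbertSchmidtNormSq (B ∘ₗ U.starProjection.toLinearMap) =
      hilbertSchmidtNormSq (C ∘ₗ V.starProjection.toLinearMap) +
        hilbertSchmidtNormSq (U.starProjection.toLinearMap ∘ₗ C ∘ₗ Vᗮ.starProjection.toLinearMap) :=
  calc hilbertSchmidtNormSq (B ∘ₗ U.starProjection.toLinearMap)
    _ = hilbertSchmidtNormSq (adjoint C ∘ₗ U.starProjection.toLinearMap) :=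
      hilbertSchmidtNormSq_comp_eq_of_adjoint_comp_self_eq hBC _
    _ = hilbertSchmidtNormSq (U.starProjection.toLinearMap ∘ₗ C) := by
      rw [← hilbertSchmidtNormSq_adjoint, adjoint_comp, adjoint_adjoint, adjoint_starProjection]
    _ = _ := by
      rw [hilbertSchmidtNormSq_eq_add_comp_starProjection _ V, comp_assoc, comp_assoc,
        starProjection_comp_comp_starProjection hC]

theorem map_orthogonal_le_orthogonal {B : E →ₗ[𝕜] F} {C : F →ₗ[𝕜] E}
    (hBC : adjoint B ∘ₗ B = C ∘ₗ adjoint C) (hCB : adjoint C ∘ₗ C = B ∘ₗ adjoint B)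
    {U : Submodule 𝕜 E} {V : Submodule 𝕜 F} (hB : U.map B ≤ V) (hC : V.map C ≤ U) :
    Uᗮ.map B ≤ Vᗮ := by
  have hUV := hilbertSchmidtNormSq_comp_starProjection_eq_add hBC hC
  have hVU := hilbertSchmidtNormSq_comp_starProjection_eq_add hCB hB
  have hzero : V.starProjection.toLinearMap ∘ₗ B ∘ₗ Uᗮ.starProjection.toLinearMap = 0 :=
    hilbertSchmidtNormSq_eq_zero_iff.mp <| by
      linarith [hilbertSchmidtNormSq_nonneg (V.starProjection.toLinearMap ∘ₗ B ∘ₗ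
        Uᗮ.starProjection.toLinearMap), hilbertSchmidtNormSq_nonneg (U.starProjection.toLinearMap ∘ₗ
        C ∘ₗ Vᗮ.starProjection.toLinearMap)]
  rintro _ ⟨x, hx, rfl⟩
  rw [← V.starProjection_apply_eq_zero_iff]
  simpa [Uᗮ.starProjection_eq_self_iff.mpr hx] using congr($hzero x)

end LinearMap

/-- If a coupled-normal family `A` is reducible in the coupled sense via `{U i}`, then the
orthogonal complements are also coupled-invariant; in particular `A` is fully reducible
in the coupled sense (the complements also have some nonzero and some proper member). -/
theorem stmt_15 {I : Type*} {n : I → ℕ}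
    (A : ∀ i j : I, Matrix (Fin (n i)) (Fin (n j)) ℂ)
    (hN : CoupledNormal A)
    (U : ∀ i : I, Submodule ℂ (EuclideanSpace ℂ (Fin (n i))))
    (hU : ∀ i j, (U j).map (Matrix.toEuclideanLin (A i j)) ≤ U i)
    (hne_bot : ∃ i, U i ≠ ⊥) (hne_top : ∃ i, U i ≠ ⊤) :
    (∀ i j, (U j)ᗮ.map (Matrix.toEuclideanLin (A i j)) ≤ (U i)ᗮ) ∧
    (∃ i, (U i)ᗮ ≠ ⊥) ∧ (∃ i, (U i)ᗮ ≠ ⊤) := by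
  have hT : ∀ i j, LinearMap.adjoint (toEuclideanLin (A i j)) ∘ₗ toEuclideanLin (A i j) =
      toEuclideanLin (A j i) ∘ₗ LinearMap.adjoint (toEuclideanLin (A j i)) := fun i j => by
    simpa only [← toEuclideanLin_conjTranspose_eq_adjoint, ← toLpLin_mul]
      using congr(toEuclideanLin $(hN i j))
  refine ⟨fun i j => LinearMap.map_orthogonal_le_orthogonal (hT i j) (hT j i) (hU i j) (hU j i),
    ?_, ?_⟩
  · obtain ⟨i, hi⟩ := hne_top
    exact ⟨i, by rwa [Ne, Submodule.orthogonal_eq_bot_iff]⟩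
  · obtain ⟨i, hi⟩ := hne_bot
    exact ⟨i, by rwa [Ne, Submodule.orthogonal_eq_top_iff]⟩
end

section
/- Let A = {A_ij} and B = {B_ij} be families of complex matrices, both normal in the coupled sense, and suppose A_ij S_j = S_i B_ij for all i,j with each S_i invertible (n_i×n_i). Then for all i,j: S_i S_i* A_ij = A_ij S_j S_j* and S_i* S_i B_ij = B_ij S_j* S_j. -/
open Matrix

open ComplexOrder in
lemma trace_zero_imp_zero {m n : Type*} [Fintype m] [Fintype n]
    {X : Matrix m n ℂ} (h : (Xᴴ * X).trace = 0) : X = 0 := by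
  have htr : (Xᴴ * X).trace = ∑ p : n × m, star (X p.2 p.1) * X p.2 p.1 := by
    simp [Matrix.trace, Matrix.mul_apply, Matrix.conjTranspose_apply, Fintype.sum_prod_type,
      Matrix.diag]
  rw [htr] at h
  have hz := (Fintype.sum_eq_zero_iff_of_nonneg
    (fun p : n × m => star_mul_self_nonneg (X p.2 p.1))).1 h
  ext i j
  have h2 := congr_fun hz (j, i)
  simp only [Pi.zero_apply, mul_eq_zero, star_eq_zero] at h2
  simpa using h2.elim id id

/-- Fuglede–Putnam for matrices over ℂ. -/
lemma fuglede_putnam {m n : Type*} [Fintype m] [Fintype n]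
    {M : Matrix m m ℂ} {N : Matrix n n ℂ} {T : Matrix m n ℂ}
    (hM : Mᴴ * M = M * Mᴴ) (hN : Nᴴ * N = N * Nᴴ) (h : M * T = T * N) :
    Mᴴ * T = T * Nᴴ := by
  have hadj : Tᴴ * Mᴴ = Nᴴ * Tᴴ := by
    have := congrArg conjTranspose h
    simpa [conjTranspose_mul] using this
  set X := Mᴴ * T - T * Nᴴ with hX
  have hXH : Xᴴ = Tᴴ * M - N * Tᴴ := by
    simp [hX, conjTranspose_sub, conjTranspose_mul]
  have t1 : Matrix.trace (Tᴴ * M * (Mᴴ * T)) = Matrix.trace (N * Nᴴ * (Tᴴ * T)) := by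
    calc Matrix.trace (Tᴴ * M * (Mᴴ * T))
        = Matrix.trace (Tᴴ * (M * Mᴴ) * T) := congrArg Matrix.trace (by simp only [Matrix.mul_assoc])
      _ = Matrix.trace (Tᴴ * (Mᴴ * M) * T) := by rw [hM]
      _ = Matrix.trace ((Tᴴ * Mᴴ) * (M * T)) := congrArg Matrix.trace (by simp only [Matrix.mul_assoc])
      _ = Matrix.trace ((Nᴴ * Tᴴ) * (T * N)) := by rw [hadj, h]
      _ = Matrix.trace ((Nᴴ * (Tᴴ * T)) * N) := congrArg Matrix.trace (by simp only [Matrix.mul_assoc])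
      _ = Matrix.trace (N * (Nᴴ * (Tᴴ * T))) := trace_mul_comm _ _
      _ = Matrix.trace (N * Nᴴ * (Tᴴ * T)) := congrArg Matrix.trace (by simp only [Matrix.mul_assoc])
  have t2 : Matrix.trace (Tᴴ * M * (T * Nᴴ)) = Matrix.trace (N * Nᴴ * (Tᴴ * T)) := by
    calc Matrix.trace (Tᴴ * M * (T * Nᴴ))
        = Matrix.trace (Tᴴ * (M * T) * Nᴴ) := congrArg Matrix.trace (by simp only [Matrix.mul_assoc])
      _ = Matrix.trace (Tᴴ * (T * N) * Nᴴ) := by rw [h]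
      _ = Matrix.trace ((Tᴴ * T) * (N * Nᴴ)) := congrArg Matrix.trace (by simp only [Matrix.mul_assoc])
      _ = Matrix.trace ((N * Nᴴ) * (Tᴴ * T)) := trace_mul_comm _ _
  have t3 : Matrix.trace (N * Tᴴ * (Mᴴ * T)) = Matrix.trace (N * Nᴴ * (Tᴴ * T)) := by
    calc Matrix.trace (N * Tᴴ * (Mᴴ * T))
        = Matrix.trace (N * (Tᴴ * Mᴴ) * T) := congrArg Matrix.trace (by simp only [Matrix.mul_assoc])
      _ = Matrix.trace (N * (Nᴴ * Tᴴ) * T) := by rw [hadj]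
      _ = Matrix.trace (N * Nᴴ * (Tᴴ * T)) := congrArg Matrix.trace (by simp only [Matrix.mul_assoc])
  have t4 : Matrix.trace (N * Tᴴ * (T * Nᴴ)) = Matrix.trace (N * Nᴴ * (Tᴴ * T)) := by
    calc Matrix.trace (N * Tᴴ * (T * Nᴴ))
        = Matrix.trace ((N * (Tᴴ * T)) * Nᴴ) := congrArg Matrix.trace (by simp only [Matrix.mul_assoc])
      _ = Matrix.trace (Nᴴ * (N * (Tᴴ * T))) := trace_mul_comm _ _
      _ = Matrix.trace ((Nᴴ * N) * (Tᴴ * T)) := congrArg Matrix.trace (by simp only [Matrix.mul_assoc])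
      _ = Matrix.trace ((N * Nᴴ) * (Tᴴ * T)) := by rw [hN]
  have key : (Xᴴ * X).trace = 0 := by
    have expand : Xᴴ * X =
        Tᴴ * M * (Mᴴ * T) - Tᴴ * M * (T * Nᴴ) - N * Tᴴ * (Mᴴ * T) + N * Tᴴ * (T * Nᴴ) := by
      rw [hXH, hX]; simp only [Matrix.sub_mul, Matrix.mul_sub, Matrix.mul_assoc]; abel
    rw [expand, trace_add, trace_sub, trace_sub, t1, t2, t3, t4]
    ring
  have hz : X = 0 := trace_zero_imp_zero key
  have : Mᴴ * T - T * Nᴴ = 0 := hz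
  exact sub_eq_zero.mp this

/-- For coupled-normal `A`, `B` intertwined by invertible `S_i`:
`S_i S_i* A_ij = A_ij S_j S_j*` and `S_i* S_i B_ij = B_ij S_j* S_j`. -/
theorem stmt_16 {I : Type*} {n : I → ℕ}
    (A B : ∀ i j : I, Matrix (Fin (n i)) (Fin (n j)) ℂ)
    (hAN : CoupledNormal A) (hBN : CoupledNormal B)
    (S : ∀ i : I, Matrix (Fin (n i)) (Fin (n i)) ℂ)
    (hS : ∀ i, IsUnit (S i))
    (hint : ∀ i j, A i j * S j = S i * B i j) :
    ∀ i j, S i * (S i)ᴴ * A i j = A i j * (S j * (S j)ᴴ) ∧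
      (S i)ᴴ * S i * B i j = B i j * ((S j)ᴴ * S j) := by
  intro i j
  -- block matrices
  let M : Matrix (Fin (n i) ⊕ Fin (n j)) (Fin (n i) ⊕ Fin (n j)) ℂ :=
    fromBlocks 0 (A i j) (A j i) 0
  let N : Matrix (Fin (n i) ⊕ Fin (n j)) (Fin (n i) ⊕ Fin (n j)) ℂ :=
    fromBlocks 0 (B i j) (B j i) 0
  let T : Matrix (Fin (n i) ⊕ Fin (n j)) (Fin (n i) ⊕ Fin (n j)) ℂ :=
    fromBlocks (S i) 0 0 (S j)
  have hMn : Mᴴ * M = M * Mᴴ := by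
    simp only [M, fromBlocks_conjTranspose, conjTranspose_zero, fromBlocks_multiply,
      Matrix.mul_zero, Matrix.zero_mul, add_zero, zero_add]
    rw [hAN i j, hAN j i]
  have hNn : Nᴴ * N = N * Nᴴ := by
    simp only [N, fromBlocks_conjTranspose, conjTranspose_zero, fromBlocks_multiply,
      Matrix.mul_zero, Matrix.zero_mul, add_zero, zero_add]
    rw [hBN i j, hBN j i]
  have hcomm : M * T = T * N := by
    simp only [M, N, T, fromBlocks_multiply, Matrix.mul_zero, Matrix.zero_mul,
      add_zero, zero_add]
    rw [hint i j, hint j i]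
  have hfp := fuglede_putnam hMn hNn hcomm
  simp only [M, N, T, fromBlocks_conjTranspose, conjTranspose_zero, fromBlocks_multiply,
    Matrix.mul_zero, Matrix.zero_mul, add_zero, zero_add, fromBlocks_inj] at hfp
  obtain ⟨-, h12, h21, -⟩ := hfp
  -- h21 : (A i j)ᴴ * S i = S j * (B i j)ᴴ
  have e1 : (S i)ᴴ * A i j = B i j * (S j)ᴴ := by
    have := congrArg conjTranspose h21
    simpa [conjTranspose_mul] using this
  constructor
  · calc S i * (S i)ᴴ * A i j = S i * ((S i)ᴴ * A i j) := by rw [Matrix.mul_assoc]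
      _ = S i * B i j * (S j)ᴴ := by rw [e1, Matrix.mul_assoc]
      _ = A i j * S j * (S j)ᴴ := by rw [hint i j]
      _ = A i j * (S j * (S j)ᴴ) := by rw [Matrix.mul_assoc]
  · calc (S i)ᴴ * S i * B i j = (S i)ᴴ * (S i * B i j) := by rw [Matrix.mul_assoc]
      _ = (S i)ᴴ * A i j * S j := by rw [← hint i j, Matrix.mul_assoc]
      _ = B i j * ((S j)ᴴ * S j) := by rw [e1, Matrix.mul_assoc]
end
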